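/- Consistency of the Schwarz–Witten degree-8 form (Remark 1.1): for commuting formal variables (degree-4 classes) p, a, b (representing p₁(TZ), p₁(F₁), p₁(F₂)) and degree-8 classes P, A', B' (representing p₂(TZ), p₂(F₁), p₂(F₂)), when m = n + 32 the degree-8 component of −[(e^{(p−a+b)/24} − 1)/(p−a+b)]·Â·ch(𝔇) + e^{(p−a+b)/24}·Â equals (1/24)·[(−3p² + 4P)/8 − 2a² + 4A' + 2b² − 4B' + (1/2)p(a−b)], where Â = 1 − p/24 + (7p² − 4P)/5760 + …, and ch(𝔇) is the Chern character of 𝔇 = Λ²F₁ + S²F₂ − F₁⊗F₂ + T_ℂZ − 2 expressed in Pontryagin classes with dim F₁ − dim F₂ = 32 and fiber dimension 10. -/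

import Mathlib

/-!
Extracting weighted homogeneous components is multiplicative in the sense of the product rule
`(φ ψ)ₙ = ∑_{i + j = n} φᵢ ψⱼ` (the weighted grading makes `ℚ[p, a, b, P, A', B']` a graded ring),
so the weight-8 part of the expression only sees the parts of weight `≤ 8` of `g`, `Â`, `ch 𝔇`
and `e^{(p−a+b)/24}`. Since all weights are multiples of 4, one may divide them by 4 and extract
the component of weight 2 instead, where the product rule has only three terms.

The rank difference `m − n = 32` enters through `ch 𝔇 = ch Λ²(F₁ − F₂) + ch T_ℂZ − 2`, which
depends only on `ch F₁ − ch F₂ = 32 + (a − b) + y` with `y = (a² − 2A' − b² + 2B')/12`: the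
dependence on `n` cancels and the constant term is `(32² − 32)/2 + 10 − 2 = 504`.
-/

open MvPolynomial Finset

namespace MvPolynomial

variable {σ R : Type*} [CommSemiring R]

section

variable {M : Type*} [AddCommMonoid M] [DecidableEq M] (w : σ → M)

attribute [local instance] weightedGradedAlgebra in
theorem weightedHomogeneousComponent_mul [HasAntidiagonal M] (φ ψ : MvPolynomial σ R) (n : M) :
    weightedHomogeneousComponent w n (φ * ψ) =
      ∑ ij ∈ antidiagonal n,
        weightedHomogeneousComponent w ij.1 φ * weightedHomogeneousComponent w ij.2 ψ := by
  have h := DirectSum.coe_mul_apply_eq_sum_antidiagonal (weightedHomogeneousSubmodule R w)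
    (DirectSum.decompose (weightedHomogeneousSubmodule R w) φ)
    (DirectSum.decompose (weightedHomogeneousSubmodule R w) ψ) n
  rw [← DirectSum.decompose_mul] at h
  simp only [← weightedDecomposition.decompose'_apply]
  exact h

theorem weightedHomogeneousComponent_X (i : σ) (m : M) :
    weightedHomogeneousComponent w m (X i : MvPolynomial σ R) = if w i = m then X i else 0 := by
  split_ifs with h
  · exact (h ▸ isWeightedHomogeneous_X R w i).weightedHomogeneousComponent_same
  · exact (isWeightedHomogeneous_X R w i).weightedHomogeneousComponent_ne m (Ne.symm h)

theorem weightedHomogeneousComponent_C (r : R) (m : M) :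
    weightedHomogeneousComponent w m (C r : MvPolynomial σ R) = if m = 0 then C r else 0 := by
  split_ifs with h
  · exact (h ▸ isWeightedHomogeneous_C w r).weightedHomogeneousComponent_same
  · exact (isWeightedHomogeneous_C w r).weightedHomogeneousComponent_ne m h

theorem weightedHomogeneousComponent_one (m : M) :
    weightedHomogeneousComponent w m (1 : MvPolynomial σ R) = if m = 0 then 1 else 0 := by
  rw [← C_1, weightedHomogeneousComponent_C]

theorem weightedHomogeneousComponent_ofNat (k : ℕ) [k.AtLeastTwo] (m : M) :
    weightedHomogeneousComponent w m (ofNat(k) : MvPolynomial σ R) =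
      if m = 0 then ofNat(k) else 0 := by
  rw [← map_ofNat C, weightedHomogeneousComponent_C]

end

theorem weightedHomogeneousComponent_smul_weight (w : σ → ℕ) {k : ℕ} (hk : k ≠ 0) (m : ℕ)
    (φ : MvPolynomial σ R) :
    weightedHomogeneousComponent (k • w) (k * m) φ = weightedHomogeneousComponent w m φ := by
  ext d
  have hweight : Finsupp.weight (k • w) d = k * Finsupp.weight w d := by
    simp [Finsupp.weight_apply, Finsupp.mul_sum, mul_left_comm]
  simp only [coeff_weightedHomogeneousComponent, hweight,
    Nat.mul_left_cancel_iff (Nat.pos_of_ne_zero hk)]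

end MvPolynomial

/-- Consistency of the Schwarz–Witten degree-8 form (Remark 1.1).  Work in the
polynomial ring `ℚ[p, a, b, P, A', B']` graded by the weights `(4,4,4,8,8,8)`,
where `p, a, b` stand for `p₁(TZ), p₁(F₁), p₁(F₂)` and `P, A', B'` for
`p₂(TZ), p₂(F₁), p₂(F₂)`.  With `m = n + 32`,
`Â = 1 − p/24 + (7p² − 4P)/5760`, `ch(T_ℂZ) = 10 + p + (p²−2P)/12`,
`ch(F₁) = m + a + (a²−2A')/12`, `ch(F₁)[2] = m + 4a + 4(a²−2A')/3` (similarly for `F₂`),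
`ch(Λ²F₁) = (ch(F₁)² − ch(F₁)[2])/2`, `ch(S²F₂) = (ch(F₂)² + ch(F₂)[2])/2`,
`ch(𝔇) = ch(Λ²F₁) + ch(S²F₂) − ch(F₁)ch(F₂) + ch(T_ℂZ) − 2`,
`e^{(p−a+b)/24} = ∑_{k≤3} ((p−a+b)/24)^k/k!` and
`g = (e^{(p−a+b)/24} − 1)/(p−a+b) = 1/24 + (p−a+b)/1152 + (p−a+b)²/82944`,
the weight-8 component of `−g·Â·ch(𝔇) + e^{(p−a+b)/24}·Â` equals
`(1/24)[(−3p²+4P)/8 − 2a² + 4A' + 2b² − 4B' + (1/2)p(a−b)]`. -/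
theorem schwarz_witten_degree8_form (n : ℕ) :
    let w : Fin 6 → ℕ := ![4, 4, 4, 8, 8, 8]
    let p : MvPolynomial (Fin 6) ℚ := X 0
    let a : MvPolynomial (Fin 6) ℚ := X 1
    let b : MvPolynomial (Fin 6) ℚ := X 2
    let P2 : MvPolynomial (Fin 6) ℚ := X 3
    let A2 : MvPolynomial (Fin 6) ℚ := X 4
    let B2 : MvPolynomial (Fin 6) ℚ := X 5
    let Ahat := 1 - C (1/24 : ℚ) * p + C (1/5760 : ℚ) * (7 * p ^ 2 - 4 * P2)
    let chT := C (10 : ℚ) + p + C (1/12 : ℚ) * (p ^ 2 - 2 * P2)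
    let chF1 := C ((n : ℚ) + 32) + a + C (1/12 : ℚ) * (a ^ 2 - 2 * A2)
    let chF1sq := C ((n : ℚ) + 32) + 4 * a + C (4/3 : ℚ) * (a ^ 2 - 2 * A2)
    let chF2 := C (n : ℚ) + b + C (1/12 : ℚ) * (b ^ 2 - 2 * B2)
    let chF2sq := C (n : ℚ) + 4 * b + C (4/3 : ℚ) * (b ^ 2 - 2 * B2)
    let chLam2F1 := C (1/2 : ℚ) * (chF1 ^ 2 - chF1sq)
    let chS2F2 := C (1/2 : ℚ) * (chF2 ^ 2 + chF2sq)
    let chD := chLam2F1 + chS2F2 - chF1 * chF2 + chT - 2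
    let w0 := p - a + b
    let Eexp := 1 + C (1/24 : ℚ) * w0 + C (1/1152 : ℚ) * w0 ^ 2 + C (1/82944 : ℚ) * w0 ^ 3
    let g := C (1/24 : ℚ) + C (1/1152 : ℚ) * w0 + C (1/82944 : ℚ) * w0 ^ 2
    weightedHomogeneousComponent w 8 (-(g * Ahat * chD) + Eexp * Ahat)
      = C (1/24 : ℚ) *
          (C (1/8 : ℚ) * (-3 * p ^ 2 + 4 * P2) - 2 * a ^ 2 + 4 * A2 + 2 * b ^ 2 - 4 * B2
            + C (1/2 : ℚ) * p * (a - b)) := by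
  intro w p a b P2 A2 B2 Ahat chT chF1 chF1sq chF2 chF2sq chLam2F1 chS2F2 chD w0 Eexp g
  set y : MvPolynomial (Fin 6) ℚ := C (1 / 12) * (a ^ 2 - 2 * A2 - (b ^ 2 - 2 * B2))
  have hchD : chD = C 504 + p + 30 * (a - b) + 24 * y + C (1 / 2) * (a - b) ^ 2
      + C (1 / 12) * (p ^ 2 - 2 * P2) + (a - b) * y + C (1 / 2) * y ^ 2 :=
    -- `ring` treats `C q` as an atom, so identities with rational coefficients are checked on values
    MvPolynomial.funext fun x => by
      simp only [chD, chLam2F1, chS2F2, chF1, chF1sq, chF2, chF2sq, chT, y, map_add, map_sub,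
        map_mul, map_pow, map_ofNat, eval_C]
      ring
  have hw : w = 4 • ![1, 1, 1, 2, 2, 2] := by
    ext i
    fin_cases i <;> rfl
  rw [hchD, hw, show (8 : ℕ) = 4 * 2 from rfl,
    weightedHomogeneousComponent_smul_weight _ four_ne_zero]
  simp only [map_add, map_sub, map_neg, weightedHomogeneousComponent_one,
    weightedHomogeneousComponent_mul, weightedHomogeneousComponent_X,
    weightedHomogeneousComponent_C, weightedHomogeneousComponent_ofNat,
    Finset.Nat.sum_antidiagonal_succ, Finset.Nat.antidiagonal_zero, Finset.sum_singleton,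
    pow_succ, pow_zero, Ahat, Eexp, g, w0, y, p, a, b, P2, A2, B2, Matrix.cons_val,
    Nat.reduceEqDiff, reduceIte]
  exact MvPolynomial.funext fun x => by
    simp only [map_add, map_sub, map_mul, map_neg, map_zero, map_one, map_ofNat, eval_C, eval_X]
    ring
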